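/- Let μ ∈ P([0,1]) be a Borel probability measure on [0,1]. Then the integral periodic zero set Z(μ) = {ξ ∈ ℝ : μ̂(ξ+k) = 0 for all k ∈ ℤ} is nonempty if and only if μ = (1/2)(δ_0 + δ_1). -/

import Mathlib

/-!
If `μ̂(ξ + k) = 0` for all `k ∈ ℤ`, the functional `g ↦ ∫ e^{2πiξx} g(x) dμ(x)` on continuous
`1`-periodic functions kills every character `e^{2πikx}`, hence, by density of trigonometric
polynomials, every such `g`. Testing it on the periodic extension of `x(1-x)e^{-2πiξx}` from
`[0,1]` gives `∫ x(1-x) dμ = 0`, so `μ = a δ₀ + b δ₁`; then `a + b e^{2πiξ} = 0` with `a + b = 1`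
forces `a = b = 1/2`. Conversely `(δ₀ + δ₁)/2` has transform `(1 + e^{2πit})/2`, which vanishes
on `1/2 + ℤ`.
-/

open MeasureTheory Complex

/-- The Fourier transform `μ̂(t) = ∫ e^{2πitx} dμ(x)`. -/
noncomputable def ft (μ : Measure ℝ) (t : ℝ) : ℂ :=
  ∫ x, Complex.exp (2 * Real.pi * Complex.I * t * x) ∂μ

open scoped Real ENNReal

lemma norm_exp_two_pi_I_mul_mul (t x : ℝ) : ‖exp (2 * π * I * t * x)‖ = 1 := by
  rw [show 2 * (π : ℂ) * I * t * x = ((2 * π * t * x : ℝ) : ℂ) * I by push_cast; ring]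
  exact norm_exp_ofReal_mul_I _

lemma ft_smul_dirac_add_smul_dirac {a b : ℝ≥0∞} (ha : a ≠ ∞) (hb : b ≠ ∞) (x y t : ℝ) :
    ft (a • Measure.dirac x + b • Measure.dirac y) t =
      a.toReal * exp (2 * π * I * t * x) + b.toReal * exp (2 * π * I * t * y) := by
  rw [ft, integral_add_measure ((integrable_dirac (by simp)).smul_measure ha)
    ((integrable_dirac (by simp)).smul_measure hb), integral_smul_measure, integral_smul_measure,
    integral_dirac, integral_dirac, real_smul, real_smul]

lemma eq_of_ft_smul_dirac_add_smul_dirac_eq_zero {a b : ℝ≥0∞} (ha : a ≠ ∞) (hb : b ≠ ∞)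
    {x y t : ℝ} (h : ft (a • Measure.dirac x + b • Measure.dirac y) t = 0) : a = b := by
  rw [ft_smul_dirac_add_smul_dirac ha hb, add_eq_zero_iff_eq_neg] at h
  have := congrArg norm h
  rw [norm_neg, norm_mul, norm_mul, norm_exp_two_pi_I_mul_mul, norm_exp_two_pi_I_mul_mul, mul_one,
    mul_one, norm_real, norm_real, Real.norm_of_nonneg ENNReal.toReal_nonneg,
    Real.norm_of_nonneg ENNReal.toReal_nonneg] at this
  exact (ENNReal.toReal_eq_toReal_iff' ha hb).1 this

section TwistedPairing

variable (μ : Measure ℝ) [IsFiniteMeasure μ] (ξ : ℝ)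

lemma integrable_exp_mul_comp_coe (g : C(AddCircle (1 : ℝ), ℂ)) :
    Integrable (fun x : ℝ => exp (2 * π * I * ξ * x) * g x) μ :=
  (integrable_const ‖g‖).mono'
    (by fun_prop : Continuous fun x : ℝ => exp (2 * π * I * ξ * x) * g x).aestronglyMeasurable
    (ae_of_all _ fun x => by
      rw [norm_mul, norm_exp_two_pi_I_mul_mul, one_mul]; exact g.norm_coe_le_norm _)

noncomputable def twistedPairing : C(AddCircle (1 : ℝ), ℂ) →L[ℂ] ℂ :=
  LinearMap.mkContinuous
    { toFun g := ∫ x, exp (2 * π * I * ξ * x) * g x ∂μ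
      map_add' g h := by
        simp only [ContinuousMap.add_apply, mul_add]
        exact integral_add (integrable_exp_mul_comp_coe μ ξ g) (integrable_exp_mul_comp_coe μ ξ h)
      map_smul' c g := by
        simp only [ContinuousMap.smul_apply, smul_eq_mul, mul_left_comm _ c]
        exact integral_const_mul c _ }
    (μ.real Set.univ) fun g => by
      refine (norm_integral_le_of_norm_le_const (ae_of_all _ fun x => ?_)).trans_eq (mul_comm _ _)
      rw [norm_mul, norm_exp_two_pi_I_mul_mul, one_mul]
      exact g.norm_coe_le_norm _

lemma twistedPairing_apply (g : C(AddCircle (1 : ℝ), ℂ)) :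
    twistedPairing μ ξ g = ∫ x, exp (2 * π * I * ξ * x) * g x ∂μ := rfl

lemma twistedPairing_fourier (k : ℤ) : twistedPairing μ ξ (fourier k) = ft μ (ξ + k) := by
  simp only [twistedPairing_apply, fourier_coe_apply, ← exp_add, ft]
  congr 1 with x
  push_cast
  ring_nf

variable {μ ξ}

lemma twistedPairing_eq_zero (h : ∀ k : ℤ, ft μ (ξ + k) = 0) : twistedPairing μ ξ = 0 :=
  ContinuousLinearMap.ext_on
    (Submodule.dense_iff_topologicalClosure_eq_top.2 span_fourier_closure_eq_top)
    (by rintro _ ⟨k, rfl⟩; simpa [twistedPairing_fourier] using h k)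

end TwistedPairing

lemma AddCircle.liftIco_zero_coe_ae_eq {p : ℝ} [Fact (0 < p)] {B : Type*} {μ : Measure ℝ}
    (hμ : μ (Set.Icc 0 p)ᶜ = 0) {F : ℝ → B} (hF : F 0 = F p) :
    (fun x : ℝ => AddCircle.liftIco p 0 F x) =ᵐ[μ] F := by
  filter_upwards [mem_ae_iff.2 hμ] with x hx
  rcases hx.2.lt_or_eq with hxp | rfl
  · exact AddCircle.liftIco_zero_coe_apply ⟨hx.1, hxp⟩
  · rw [AddCircle.coe_period, ← hF, ← AddCircle.coe_zero]
    exact AddCircle.liftIco_zero_coe_apply ⟨le_rfl, Fact.out⟩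

section ConcentrationOnEndpoints

variable {μ : Measure ℝ} [IsFiniteMeasure μ] {ξ : ℝ}

lemma integral_mul_one_sub_eq_zero_of_ft_eq_zero (hμ : μ (Set.Icc 0 1)ᶜ = 0)
    (hξ : ∀ k : ℤ, ft μ (ξ + k) = 0) : ∫ x, x * (1 - x) ∂μ = 0 := by
  set F : ℝ → ℂ := fun x => (x * (1 - x) : ℝ) * exp (2 * π * I * (-ξ) * x)
  have hF : F 0 = F 1 := by simp [F]
  have hFc : Continuous F := by fun_prop
  have h : twistedPairing μ ξ ⟨_, AddCircle.liftIco_zero_continuous hF hFc.continuousOn⟩ = 0 := by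
    rw [twistedPairing_eq_zero hξ, zero_apply]
  simp only [twistedPairing_apply, ContinuousMap.coe_mk] at h
  have hpt : ∀ x : ℝ, exp (2 * π * I * ξ * x) * F x = (x * (1 - x) : ℝ) := fun x => by
    rw [mul_left_comm, ← exp_add, show 2 * π * I * ξ * x + 2 * π * I * -(ξ : ℂ) * x = 0 by ring,
      exp_zero, mul_one]
  rw [integral_congr_ae ((AddCircle.liftIco_zero_coe_ae_eq hμ hF).mono
    fun x (hx : AddCircle.liftIco 1 0 F x = F x) => by rw [hx, hpt]),
    integral_complex_ofReal] at h
  exact_mod_cast h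

lemma ae_eq_zero_or_eq_one_of_ft_eq_zero (hμ : μ (Set.Icc 0 1)ᶜ = 0)
    (hξ : ∀ k : ℤ, ft μ (ξ + k) = 0) : ∀ᵐ x ∂μ, x = 0 ∨ x = 1 := by
  have hmem : ∀ᵐ x ∂μ, x ∈ Set.Icc (0 : ℝ) 1 := mem_ae_iff.2 hμ
  have hnonneg : 0 ≤ᵐ[μ] fun x => x * (1 - x) :=
    hmem.mono fun x hx => mul_nonneg hx.1 (sub_nonneg.2 hx.2)
  have hint : Integrable (fun x => x * (1 - x)) μ :=
    (integrable_const 1).mono'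
      (by fun_prop : Continuous fun x : ℝ => x * (1 - x)).aestronglyMeasurable
      (hmem.mono fun x hx => abs_le.2 ⟨by nlinarith [hx.1, hx.2], by nlinarith [hx.1, hx.2]⟩)
  filter_upwards [(integral_eq_zero_iff_of_nonneg_ae hnonneg hint).1
    (integral_mul_one_sub_eq_zero_of_ft_eq_zero hμ hξ)] with x hx
  simpa [sub_eq_zero, eq_comm (a := (1 : ℝ))] using hx

end ConcentrationOnEndpoints

/-- Let `μ` be a Borel probability measure on `[0,1]`.  The integral
periodic zero set `Z(μ) = {ξ : μ̂(ξ+k) = 0 for all k ∈ ℤ}` is nonempty iff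
`μ = (1/2)(δ₀ + δ₁)`. -/
theorem integral_periodic_zero_set_nonempty_iff
    (μ : Measure ℝ) [IsProbabilityMeasure μ] (hsupp : μ (Set.Icc (0:ℝ) 1)ᶜ = 0) :
    (∃ ξ : ℝ, ∀ k : ℤ, ft μ (ξ + k) = 0) ↔
      μ = (2 : ENNReal)⁻¹ • (Measure.dirac (0:ℝ) + Measure.dirac (1:ℝ)) := by
  constructor
  · rintro ⟨ξ, hξ⟩
    have hpair : μ = μ {0} • Measure.dirac 0 + μ {1} • Measure.dirac 1 :=
      (Measure.ae_eq_or_eq_iff_eq_dirac_add_dirac zero_ne_one).1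
        (ae_eq_zero_or_eq_one_of_ft_eq_zero hsupp hξ)
    have hequal : μ {0} = μ {1} :=
      eq_of_ft_smul_dirac_add_smul_dirac_eq_zero (measure_ne_top _ _)
        (measure_ne_top _ _) (t := ξ) (by rw [← hpair]; simpa using hξ 0)
    have hhalf : μ {0} = 2⁻¹ := by
      have htotal := congrArg (· Set.univ) hpair
      simp only [Measure.coe_add, Measure.coe_smul, Pi.add_apply, Pi.smul_apply, measure_univ,
        smul_eq_mul, mul_one, ← hequal] at htotal
      exact ENNReal.eq_inv_of_mul_eq_one_left (by rw [mul_two, htotal])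
    rw [hpair, ← hequal, hhalf, smul_add]
  · rintro rfl
    refine ⟨1 / 2, fun k => ?_⟩
    have hsign : exp (2 * π * I * ↑(1 / 2 + k : ℝ) * (1 : ℝ)) = -1 := by
      rw [show 2 * π * I * ↑(1 / 2 + k : ℝ) * ((1 : ℝ) : ℂ) = π * I + k * (2 * π * I) by
        push_cast; ring, exp_add, exp_pi_mul_I, exp_int_mul_two_pi_mul_I, mul_one]
    rw [smul_add, ft_smul_dirac_add_smul_dirac (by simp) (by simp), hsign]
    simp
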